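/- arXiv:2310.01913 — 2 statements merged into one kernel-verified Lean document; each statement's English description precedes it below -/
import Mathlib

section
/- Assume RH. For every α ∈ ℝ and every T ≥ 15, one has Σ_{0<γ,γ'≤T} T^{iα(γ−γ')} w(γ−γ') = 2π ∫_{−∞}^{∞} e^{−4π|u|} |Σ_{0<γ≤T} T^{iαγ} e^{2πiγu}|² du; in particular F(α,T) is a nonnegative real number and F(−α,T) = F(α,T). -/
open MeasureTheory Filter
open scoped Classical

noncomputable section

/-- Multiplicity of `1/2 + γ i` as a zero of the Riemann zeta-function. -/
def zetaMult (γ : ℝ) : ℕ :=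
  if h : AnalyticAt ℂ riemannZeta (1 / 2 + γ * Complex.I) then (analyticOrderAt riemannZeta (1 / 2 + γ * Complex.I)).toNat else 0

/-- `N(T)`: the number of nontrivial zeros of `ζ` with ordinate in `(0, T]`,
counted with multiplicity (under RH). -/
def zeroCount (T : ℝ) : ℝ :=
  ∑' γ : ℝ, if 0 < γ ∧ γ ≤ T then (zetaMult γ : ℝ) else 0

/-- The double sum `∑_{0<γ,γ'≤T} T^{iα(γ-γ')} w(γ-γ')` with `w(u) = 4/(4+u²)`,
zeros counted with multiplicity. -/
def pairSum (α T : ℝ) : ℂ :=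
  ∑' γ : ℝ, ∑' γ' : ℝ,
    if (0 < γ ∧ γ ≤ T) ∧ (0 < γ' ∧ γ' ≤ T) then
      (zetaMult γ : ℂ) * (zetaMult γ' : ℂ) * (T : ℂ) ^ (Complex.I * (α : ℂ) * ((γ : ℂ) - (γ' : ℂ)))
        * (4 / (4 + ((γ : ℂ) - (γ' : ℂ)) ^ 2))
    else 0

/-- Montgomery's function `F(α, T)` (real-valued). -/
def montgomeryF (α T : ℝ) : ℝ := (pairSum α T).re / zeroCount T

/-!
Only finitely many ordinates lie in `(0, T]`, so every sum is finite. With `a_γ = m_γ T^{iαγ}`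
(`m_γ` the multiplicity), expanding the square gives
`|∑ a_γ e^{2πiγu}|² = ∑_{γ,γ'} a_γ conj(a_γ') e^{2πi(γ-γ')u}`, and integrating term by term
against `e^{-4π|u|}` uses the Fourier transform `∫ e^{-a|u|} e^{ibu} du = 2a/(a² + b²)`;
for `a = 4π`, `b = 2π(γ - γ')` this is `w(γ - γ')/(2π)`. Hence `F(α, T) ≥ 0`, and
`F(-α, T) = F(α, T)` is the swap `γ ↔ γ'` in the double sum.
-/

open Complex Set
open scoped Real ComplexConjugate

section ExpNegAbs

variable {a : ℝ} (b : ℝ)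

lemma ofReal_exp_neg_mul_abs_mul_cexp_of_nonneg {u : ℝ} (hu : 0 ≤ u) :
    (Real.exp (-(a * |u|)) : ℂ) * cexp (b * u * I) = cexp ((-a + b * I) * u) := by
  rw [abs_of_nonneg hu, ofReal_exp, ← Complex.exp_add]
  push_cast
  ring_nf

lemma ofReal_exp_neg_mul_abs_mul_cexp_of_nonpos {u : ℝ} (hu : u ≤ 0) :
    (Real.exp (-(a * |u|)) : ℂ) * cexp (b * u * I) = cexp ((a + b * I) * u) := by
  rw [abs_of_nonpos hu, ofReal_exp, ← Complex.exp_add]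
  push_cast
  ring_nf

lemma integrableOn_Iic_exp_neg_mul_abs_mul_cexp (ha : 0 < a) :
    IntegrableOn (fun u : ℝ => (Real.exp (-(a * |u|)) : ℂ) * cexp (b * u * I)) (Iic 0) :=
  (integrableOn_exp_mul_complex_Iic (a := a + b * I) (by simpa using ha) 0).congr_fun
    (fun _ hu => (ofReal_exp_neg_mul_abs_mul_cexp_of_nonpos b hu).symm) measurableSet_Iic

lemma integrableOn_Ioi_exp_neg_mul_abs_mul_cexp (ha : 0 < a) :
    IntegrableOn (fun u : ℝ => (Real.exp (-(a * |u|)) : ℂ) * cexp (b * u * I)) (Ioi 0) :=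
  (integrableOn_exp_mul_complex_Ioi (a := -a + b * I) (by simpa using ha) 0).congr_fun
    (fun _ hu => (ofReal_exp_neg_mul_abs_mul_cexp_of_nonneg b (le_of_lt hu)).symm)
    measurableSet_Ioi

lemma integrable_exp_neg_mul_abs_mul_cexp (ha : 0 < a) :
    Integrable (fun u : ℝ => (Real.exp (-(a * |u|)) : ℂ) * cexp (b * u * I)) := by
  rw [← integrableOn_univ, ← Iic_union_Ioi (a := (0 : ℝ)), integrableOn_union]
  exact ⟨integrableOn_Iic_exp_neg_mul_abs_mul_cexp b ha,
    integrableOn_Ioi_exp_neg_mul_abs_mul_cexp b ha⟩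

lemma integral_exp_neg_mul_abs_mul_cexp (ha : 0 < a) :
    ∫ u : ℝ, (Real.exp (-(a * |u|)) : ℂ) * cexp (b * u * I) = 2 * a / (a ^ 2 + b ^ 2) := by
  rw [← intervalIntegral.integral_Iic_add_Ioi (integrableOn_Iic_exp_neg_mul_abs_mul_cexp b ha)
      (integrableOn_Ioi_exp_neg_mul_abs_mul_cexp b ha),
    setIntegral_congr_fun measurableSet_Iic
      (fun _ hu => ofReal_exp_neg_mul_abs_mul_cexp_of_nonpos b hu),
    setIntegral_congr_fun measurableSet_Ioi
      (fun _ hu => ofReal_exp_neg_mul_abs_mul_cexp_of_nonneg b (le_of_lt hu)),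
    integral_exp_mul_complex_Iic (by simpa using ha),
    integral_exp_mul_complex_Ioi (by simpa using ha)]
  simp only [ofReal_zero, mul_zero, Complex.exp_zero]
  have h₁ : (a : ℂ) + b * I ≠ 0 := fun h => by simpa [ha.ne'] using congrArg re h
  have h₂ : -(a : ℂ) + b * I ≠ 0 := fun h => by simpa [ha.ne'] using congrArg re h
  have h₃ : (a : ℂ) ^ 2 + b ^ 2 ≠ 0 := by exact_mod_cast (by positivity : a ^ 2 + b ^ 2 ≠ 0)
  field_simp
  linear_combination (-2 * a * b ^ 2 : ℂ) * I_sq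

end ExpNegAbs

lemma riemannZeta_eq_zero_of_zetaMult_ne_zero {γ : ℝ} (h : zetaMult γ ≠ 0) :
    riemannZeta (1 / 2 + γ * I) = 0 := by
  unfold zetaMult at h
  split_ifs at h with hζ
  · exact hζ.analyticOrderAt_ne_zero.mp fun h0 => h (by rw [h0, ENat.toNat_zero])
  · exact absurd rfl h

lemma finite_setOf_zetaMult_ne_zero (T : ℝ) :
    {γ : ℝ | (0 < γ ∧ γ ≤ T) ∧ zetaMult γ ≠ 0}.Finite := by
  set line : ℝ → ℂ := fun t => 1 / 2 + t * I
  have hline : Function.Injective line := fun s t h => by simpa [line] using congrArg im h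
  have hK : IsCompact (line '' Icc 0 T) := isCompact_Icc.image (by fun_prop)
  refine ((hK.inter_riemannZetaZeros_finite).preimage hline.injOn).subset ?_
  rintro γ ⟨⟨hγ₀, hγT⟩, hγ⟩
  exact ⟨mem_image_of_mem line ⟨hγ₀.le, hγT⟩, riemannZeta_eq_zero_of_zetaMult_ne_zero hγ⟩

def zetaOrdinates (T : ℝ) : Finset ℝ := (finite_setOf_zetaMult_ne_zero T).toFinset

lemma mem_zetaOrdinates {T γ : ℝ} :
    γ ∈ zetaOrdinates T ↔ (0 < γ ∧ γ ≤ T) ∧ zetaMult γ ≠ 0 :=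
  Set.Finite.mem_toFinset _

lemma tsum_ite_eq_sum_zetaOrdinates {M : Type*} [AddCommMonoid M] [TopologicalSpace M]
    (T : ℝ) (f : ℝ → M) (hf : ∀ γ, zetaMult γ = 0 → f γ = 0) :
    ∑' γ : ℝ, (if 0 < γ ∧ γ ≤ T then f γ else 0) = ∑ γ ∈ zetaOrdinates T, f γ := by
  rw [tsum_eq_sum (s := zetaOrdinates T)]
  · exact Finset.sum_congr rfl fun γ hγ => if_pos (mem_zetaOrdinates.mp hγ).1
  · intro γ hγ
    split_ifs with hγT
    · exact hf γ (by simpa [mem_zetaOrdinates, hγT] using hγ)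
    · rfl

lemma pairSum_eq_sum (α T : ℝ) :
    pairSum α T = ∑ γ ∈ zetaOrdinates T, ∑ γ' ∈ zetaOrdinates T,
      (zetaMult γ : ℂ) * (zetaMult γ' : ℂ) * (T : ℂ) ^ (I * (α : ℂ) * ((γ : ℂ) - (γ' : ℂ)))
        * (4 / (4 + ((γ : ℂ) - (γ' : ℂ)) ^ 2)) := by
  rw [pairSum, ← tsum_ite_eq_sum_zetaOrdinates T _ fun γ hγ => by simp [hγ]]
  congr 1; ext γ
  split_ifs with hγ
  · rw [← tsum_ite_eq_sum_zetaOrdinates T _ fun γ' hγ' => by simp [hγ']]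
    simp only [hγ, true_and]
  · simp [hγ]

lemma two_mul_pi_mul_integral_exp_neg_four_pi_abs_mul_cexp (d : ℝ) :
    2 * π * ∫ u : ℝ, (Real.exp (-(4 * π * |u|)) : ℂ) * cexp ((2 * π * d : ℝ) * u * I)
      = 4 / (4 + (d : ℂ) ^ 2) := by
  rw [integral_exp_neg_mul_abs_mul_cexp _ (by positivity)]
  have hπ : (π : ℂ) ≠ 0 := ofReal_ne_zero.mpr Real.pi_ne_zero
  have hd : (4 : ℂ) + d ^ 2 ≠ 0 := by exact_mod_cast (by positivity : (4 : ℝ) + d ^ 2 ≠ 0)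
  push_cast
  rw [show ((4 * π) ^ 2 + (2 * π * d) ^ 2 : ℂ) = 4 * π ^ 2 * (4 + d ^ 2) by ring]
  field_simp
  ring

lemma conj_ofReal_cpow {T : ℝ} (hT : 0 ≤ T) (z : ℂ) :
    conj ((T : ℂ) ^ z) = (T : ℂ) ^ conj z := by
  rw [cpow_conj _ _ (by simp [arg_ofReal_of_nonneg hT, Real.pi_ne_zero.symm]), conj_ofReal]

lemma cpow_mul_cexp_mul_conj {T : ℝ} (hT : 0 < T) (α γ γ' u : ℝ) :
    (T : ℂ) ^ (I * α * γ) * cexp ((2 * π * γ * u : ℝ) * I) *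
        conj ((T : ℂ) ^ (I * α * γ') * cexp ((2 * π * γ' * u : ℝ) * I))
      = (T : ℂ) ^ (I * α * (γ - γ')) * cexp ((2 * π * (γ - γ') : ℝ) * u * I) := by
  have hpow : (T : ℂ) ^ (I * α * γ) * (T : ℂ) ^ conj (I * α * γ')
      = (T : ℂ) ^ (I * α * (γ - γ')) := by
    rw [← cpow_add _ _ (ofReal_ne_zero.mpr hT.ne')]
    simp only [map_mul, conj_I, conj_ofReal]
    ring_nf
  have hexp : cexp ((2 * π * γ * u : ℝ) * I) * cexp (conj ((2 * π * γ' * u : ℝ) * I))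
      = cexp ((2 * π * (γ - γ') : ℝ) * u * I) := by
    rw [← Complex.exp_add]
    simp only [map_mul, conj_I, conj_ofReal]
    push_cast
    ring_nf
  rw [map_mul, conj_ofReal_cpow hT.le, ← Complex.exp_conj, mul_mul_mul_comm, hpow, hexp]

lemma sq_norm_sum_eq_sum_sum_mul_conj {ι : Type*} (s : Finset ι) (f : ι → ℂ) :
    ((‖∑ i ∈ s, f i‖ ^ 2 : ℝ) : ℂ) = ∑ i ∈ s, ∑ j ∈ s, f i * conj (f j) := by
  rw [ofReal_pow, ← mul_conj', map_sum, Finset.sum_mul_sum]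

lemma pairSum_eq_two_mul_pi_mul_integral (α : ℝ) {T : ℝ} (hT : 0 < T) :
    pairSum α T = ((2 * π * ∫ u : ℝ, Real.exp (-(4 * π * |u|)) *
      ‖∑ γ ∈ zetaOrdinates T, (zetaMult γ : ℂ) * (T : ℂ) ^ (I * α * γ) *
        cexp ((2 * π * γ * u : ℝ) * I)‖ ^ 2 : ℝ) : ℂ) := by
  set S := zetaOrdinates T
  set c : ℝ → ℝ → ℂ := fun γ γ' =>
    (zetaMult γ : ℂ) * (zetaMult γ' : ℂ) * (T : ℂ) ^ (I * α * (γ - γ'))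
  set e : ℝ → ℝ → ℂ := fun d u =>
    (Real.exp (-(4 * π * |u|)) : ℂ) * cexp ((2 * π * d : ℝ) * u * I)
  have he : ∀ d, Integrable (e d) := fun d =>
    integrable_exp_neg_mul_abs_mul_cexp _ (by positivity)
  have hsq : ∀ u, ((Real.exp (-(4 * π * |u|)) *
      ‖∑ γ ∈ S, (zetaMult γ : ℂ) * (T : ℂ) ^ (I * α * γ) *
        cexp ((2 * π * γ * u : ℝ) * I)‖ ^ 2 : ℝ) : ℂ)
        = ∑ γ ∈ S, ∑ γ' ∈ S, c γ γ' * e (γ - γ') u := by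
    intro u
    rw [ofReal_mul, sq_norm_sum_eq_sum_sum_mul_conj, Finset.mul_sum]
    refine Finset.sum_congr rfl fun γ _ => ?_
    rw [Finset.mul_sum]
    refine Finset.sum_congr rfl fun γ' _ => ?_
    rw [mul_assoc (zetaMult γ : ℂ), mul_assoc (zetaMult γ' : ℂ), map_mul, map_natCast,
      mul_mul_mul_comm, cpow_mul_cexp_mul_conj hT]
    ring
  calc pairSum α T = ∑ γ ∈ S, ∑ γ' ∈ S, 2 * π * ∫ u, c γ γ' * e (γ - γ') u := by
        rw [pairSum_eq_sum]
        refine Finset.sum_congr rfl fun γ _ => Finset.sum_congr rfl fun γ' _ => ?_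
        rw [integral_const_mul, mul_left_comm,
          two_mul_pi_mul_integral_exp_neg_four_pi_abs_mul_cexp, ofReal_sub]
    _ = 2 * π * ∫ u, ∑ γ ∈ S, ∑ γ' ∈ S, c γ γ' * e (γ - γ') u := by
        rw [integral_finsetSum _ fun γ _ => integrable_finsetSum _ fun γ' _ =>
          (he _).const_mul _, Finset.mul_sum]
        refine Finset.sum_congr rfl fun γ _ => ?_
        rw [integral_finsetSum _ fun γ' _ => (he _).const_mul _, Finset.mul_sum]
    _ = _ := by
        rw [ofReal_mul, ← integral_complex_ofReal]
        simp only [hsq]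
        push_cast
        rfl

lemma zeroCount_nonneg (T : ℝ) : 0 ≤ zeroCount T :=
  tsum_nonneg fun γ => by split_ifs <;> positivity

lemma pairSum_neg (α T : ℝ) : pairSum (-α) T = pairSum α T := by
  rw [pairSum_eq_sum, pairSum_eq_sum, Finset.sum_comm]
  refine Finset.sum_congr rfl fun γ _ => Finset.sum_congr rfl fun γ' _ => ?_
  push_cast
  ring_nf

theorem statement9_general (α T : ℝ) (hT : 15 ≤ T) :
    pairSum α T =
      ((2 * Real.pi * ∫ u : ℝ, Real.exp (-(4 * Real.pi * |u|)) *
        ‖(∑' γ : ℝ,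
          if 0 < γ ∧ γ ≤ T then
            (zetaMult γ : ℂ) * (T : ℂ) ^ (Complex.I * (α : ℂ) * (γ : ℂ)) *
              Complex.exp (((2 * Real.pi * γ * u : ℝ) : ℂ) * Complex.I)
          else 0)‖ ^ 2 : ℝ) : ℂ) ∧
    0 ≤ montgomeryF α T ∧ montgomeryF (-α) T = montgomeryF α T := by
  have hpair : pairSum α T = ((2 * π * ∫ u : ℝ, Real.exp (-(4 * π * |u|)) *
      ‖∑ γ ∈ zetaOrdinates T, (zetaMult γ : ℂ) * (T : ℂ) ^ (I * α * γ) *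
        cexp ((2 * π * γ * u : ℝ) * I)‖ ^ 2 : ℝ) : ℂ) :=
    pairSum_eq_two_mul_pi_mul_integral α (by linarith)
  refine ⟨?_, div_nonneg ?_ (zeroCount_nonneg T), by rw [montgomeryF, montgomeryF, pairSum_neg]⟩
  · convert hpair using 8 with u
    exact tsum_ite_eq_sum_zetaOrdinates T _ fun γ hγ => by simp [hγ]
  · rw [hpair, ofReal_re]
    exact mul_nonneg (by positivity) (integral_nonneg fun u => by positivity)

/-- Assume RH. For every `α ∈ ℝ` and `T ≥ 15`, one has
`∑_{0<γ,γ'≤T} T^{iα(γ−γ')} w(γ−γ') = 2π ∫ e^{−4π|u|} |∑_{0<γ≤T} T^{iαγ} e^{2πiγu}|² du`;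
in particular `F(α,T)` is a nonnegative real number and `F(−α,T) = F(α,T)`. -/
theorem statement9 (hRH : RiemannHypothesis) (α T : ℝ) (hT : 15 ≤ T) :
    pairSum α T =
      ((2 * Real.pi * ∫ u : ℝ, Real.exp (-(4 * Real.pi * |u|)) *
        ‖(∑' γ : ℝ,
          if 0 < γ ∧ γ ≤ T then
            (zetaMult γ : ℂ) * (T : ℂ) ^ (Complex.I * (α : ℂ) * (γ : ℂ)) *
              Complex.exp (((2 * Real.pi * γ * u : ℝ) : ℂ) * Complex.I)
          else 0)‖ ^ 2 : ℝ) : ℂ) ∧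
    0 ≤ montgomeryF α T ∧ montgomeryF (-α) T = montgomeryF α T :=
  statement9_general α T hT
end
end

section
/- The function s : ℝ → ℝ defined by s(x) = sin x / x for x ≠ 0 and s(0) = 1 attains a global minimum on ℝ, and its minimum value c₀ = min_{x∈ℝ} sin x / x satisfies −0.217234 < c₀ < −0.217233. -/
open MeasureTheory Filter
open scoped Classical

noncomputable section

/-- The function equal to `sin x / x` for `x ≠ 0` and to `1` at `x = 0`. -/
def sinc (x : ℝ) : ℝ := if x = 0 then 1 else Real.sin x / x

/-- `c₀ = min_{x ∈ ℝ} sin x / x = -0.217233...`. -/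
def c0 : ℝ := sInf (Set.range sinc)

/-!
Write `x = π + t`, so that `sin x = -sin t`. The tangent to `sin` at the root `a ≈ 1.351817` of
`tan a = π + a` passes through `(-π, 0)`, and by concavity of `sin` on `[0, π]` it lies above `sin`.
Hence `sin t ≤ cos a * (π + t)` up to rounding, i.e. `sin x / x ≥ -cos a ≈ -0.2172336` on `(π, 2π]`,
with equality at `x = π + a`; elsewhere `sin x ≥ 0` or `x > 2π` give cruder bounds. The values of
`sin a` and `cos a` come from the alternating Taylor bounds of `sin` and `cos` on `[0, ∞)`. Since
`|sin x / x| ≤ 1 / |x|` and the value at `π + a` is below `-1/5`, continuity gives a minimiser.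
-/

open Set
open scoped Nat Real

lemma sinc_eq_real_sinc : sinc = Real.sinc := by
  ext x
  simp [sinc, Real.sinc]

lemma neg_inv_abs_le_sinc (x : ℝ) : -|x|⁻¹ ≤ Real.sinc x := by
  rcases eq_or_ne x 0 with rfl | hx
  · simp
  rw [Real.sinc_of_ne_zero hx]
  refine neg_le_of_abs_le ?_
  rw [abs_div, div_eq_mul_inv]
  exact mul_le_of_le_one_left (by positivity) (Real.abs_sin_le_one x)

lemma nonneg_of_hasDerivAt_nonneg {f f' : ℝ → ℝ} (hf : ∀ t, HasDerivAt f (f' t) t)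
    (hf₀ : f 0 = 0) (hf' : ∀ t, 0 ≤ t → 0 ≤ f' t) {x : ℝ} (hx : 0 ≤ x) :
    0 ≤ f x := by
  have hmono : MonotoneOn f (Ici 0) :=
    monotoneOn_of_hasDerivWithinAt_nonneg (convex_Ici 0)
      (fun t _ => (hf t).continuousAt.continuousWithinAt) (fun t _ => (hf t).hasDerivWithinAt)
      (fun t ht => hf' t (interior_subset ht))
  simpa [hf₀] using hmono self_mem_Ici hx hx

namespace Real

def sinTaylor (n : ℕ) (x : ℝ) : ℝ :=
  ∑ i ∈ Finset.range n, (-1) ^ i * x ^ (2 * i + 1) / (2 * i + 1)!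

def cosTaylor (n : ℕ) (x : ℝ) : ℝ :=
  ∑ i ∈ Finset.range n, (-1) ^ i * x ^ (2 * i) / (2 * i)!

lemma hasDerivAt_sinTaylor (n : ℕ) (x : ℝ) : HasDerivAt (sinTaylor n) (cosTaylor n x) x := by
  unfold sinTaylor cosTaylor
  refine HasDerivAt.fun_sum fun i _ => ?_
  refine (((hasDerivAt_pow (2 * i + 1) x).const_mul ((-1 : ℝ) ^ i)).div_const
    ((2 * i + 1)! : ℝ)).congr_deriv ?_
  rw [Nat.factorial_succ]
  push_cast
  field_simp

lemma hasDerivAt_cosTaylor_succ (n : ℕ) (x : ℝ) :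
    HasDerivAt (cosTaylor (n + 1)) (-sinTaylor n x) x := by
  have hcos : cosTaylor (n + 1) = fun y : ℝ =>
      ∑ i ∈ Finset.range n, (-1) ^ (i + 1) * y ^ (2 * i + 2) / (2 * i + 2)! + 1 := by
    ext y
    simp [cosTaylor, Finset.sum_range_succ', mul_add]
  rw [hcos, sinTaylor, ← Finset.sum_neg_distrib]
  refine (HasDerivAt.fun_sum fun i _ => ?_).add_const 1
  refine (((hasDerivAt_pow (2 * i + 2) x).const_mul ((-1 : ℝ) ^ (i + 1))).div_const
    ((2 * i + 2)! : ℝ)).congr_deriv ?_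
  rw [show 2 * i + 2 = (2 * i + 1) + 1 by ring, Nat.factorial_succ]
  push_cast
  field_simp
  ring

variable {x : ℝ}

lemma neg_one_pow_mul_sinTaylor_sub_sin_nonneg_of_cos {n : ℕ}
    (hcos : ∀ t, 0 ≤ t → 0 ≤ (-1) ^ n * (cosTaylor (n + 1) t - cos t)) (hx : 0 ≤ x) :
    0 ≤ (-1) ^ n * (sinTaylor (n + 1) x - sin x) :=
  nonneg_of_hasDerivAt_nonneg
    (fun t => ((hasDerivAt_sinTaylor (n + 1) t).sub (hasDerivAt_sin t)).const_mul _)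
    (by simp [sinTaylor]) hcos hx

lemma neg_one_pow_mul_cosTaylor_sub_cos_nonneg (n : ℕ) (hx : 0 ≤ x) :
    0 ≤ (-1) ^ n * (cosTaylor (n + 1) x - cos x) := by
  induction n generalizing x with
  | zero => simpa [cosTaylor] using cos_le_one x
  | succ n ih =>
    refine nonneg_of_hasDerivAt_nonneg
      (fun t => ((hasDerivAt_cosTaylor_succ (n + 1) t).sub (hasDerivAt_cos t)).const_mul _)
      (by simp [cosTaylor, Finset.sum_range_succ']) (fun t ht => ?_) hx
    have := neg_one_pow_mul_sinTaylor_sub_sin_nonneg_of_cos (fun t ht => ih ht) ht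
    rw [pow_succ]
    linarith

lemma neg_one_pow_mul_sinTaylor_sub_sin_nonneg (n : ℕ) (hx : 0 ≤ x) :
    0 ≤ (-1) ^ n * (sinTaylor (n + 1) x - sin x) :=
  neg_one_pow_mul_sinTaylor_sub_sin_nonneg_of_cos
    (fun _ ht => neg_one_pow_mul_cosTaylor_sub_cos_nonneg n ht) hx

lemma sin_mem_Icc_sinTaylor (n : ℕ) (hx : 0 ≤ x) :
    sin x ∈ Icc (sinTaylor (2 * n + 2) x) (sinTaylor (2 * n + 1) x) := by
  have hlo := neg_one_pow_mul_sinTaylor_sub_sin_nonneg (2 * n + 1) hx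
  have hhi := neg_one_pow_mul_sinTaylor_sub_sin_nonneg (2 * n) hx
  rw [(odd_two_mul_add_one n).neg_one_pow] at hlo
  rw [(even_two_mul n).neg_one_pow] at hhi
  constructor <;> linarith

lemma cos_mem_Icc_cosTaylor (n : ℕ) (hx : 0 ≤ x) :
    cos x ∈ Icc (cosTaylor (2 * n + 2) x) (cosTaylor (2 * n + 1) x) := by
  have hlo := neg_one_pow_mul_cosTaylor_sub_cos_nonneg (2 * n + 1) hx
  have hhi := neg_one_pow_mul_cosTaylor_sub_cos_nonneg (2 * n) hx
  rw [(odd_two_mul_add_one n).neg_one_pow] at hlo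
  rw [(even_two_mul n).neg_one_pow] at hhi
  constructor <;> linarith

end Real

lemma ConcaveOn.le_add_mul_sub_of_hasDerivAt {S : Set ℝ} {f : ℝ → ℝ} {f' a t : ℝ}
    (hf : ConcaveOn ℝ S f) (ha : a ∈ S) (ht : t ∈ S) (hfa : HasDerivAt f f' a) :
    f t ≤ f a + f' * (t - a) := by
  rcases lt_trichotomy t a with hta | rfl | hat
  · have := hf.le_slope_of_hasDerivAt ht ha hta hfa
    rw [slope_def_field, le_div_iff₀ (sub_pos.2 hta)] at this
    linarith
  · simp
  · have := hf.slope_le_of_hasDerivAt ha ht hat hfa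
    rw [slope_def_field, div_le_iff₀ (sub_pos.2 hat)] at this
    linarith

lemma sin_cos_tangentPoint_bounds :
    Real.sin 1.351817 ∈ Icc (0.97611968 : ℝ) 0.97611969 ∧
      Real.cos 1.351817 ∈ Icc (0.21723343 : ℝ) 0.21723344 := by
  have hs := Real.sin_mem_Icc_sinTaylor 3 (x := 1.351817) (by norm_num)
  have hc := Real.cos_mem_Icc_cosTaylor 3 (x := 1.351817) (by norm_num)
  norm_num [Real.sinTaylor, Real.cosTaylor, Finset.sum_range_succ, Nat.factorial] at hs hc
  exact ⟨⟨by linarith, by linarith⟩, by linarith, by linarith⟩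

lemma neg_mul_lt_sin_of_pi_lt_of_le_two_pi {y : ℝ} (hπy : π < y) (hy2π : y ≤ 2 * π) :
    -0.217234 * y < Real.sin y := by
  obtain ⟨⟨hs, hs'⟩, hc, hc'⟩ := sin_cos_tangentPoint_bounds
  have hπ := Real.pi_gt_d6
  set t := y - π with ht
  have htangent : Real.sin t ≤ Real.sin 1.351817 + Real.cos 1.351817 * (t - 1.351817) :=
    strictConcaveOn_sin_Icc.concaveOn.le_add_mul_sub_of_hasDerivAt
      ⟨by norm_num, by linarith⟩ ⟨by linarith, by linarith⟩ (Real.hasDerivAt_sin _)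
  have hslope : 0 ≤ (0.217234 - Real.cos 1.351817) * t := mul_nonneg (by linarith) (by linarith)
  rw [Real.sin_sub_pi] at htangent
  nlinarith

lemma neg_mul_lt_sin {y : ℝ} (hy : 0 < y) : -0.217234 * y < Real.sin y := by
  rcases le_or_gt y π with hyπ | hπy
  · linarith [Real.sin_nonneg_of_nonneg_of_le_pi hy.le hyπ]
  rcases le_or_gt y (2 * π) with hy2π | h2πy
  · exact neg_mul_lt_sin_of_pi_lt_of_le_two_pi hπy hy2π
  · linarith [Real.neg_one_le_sin y, Real.pi_gt_three]

lemma neg_lt_sinc (x : ℝ) : -0.217234 < Real.sinc x := by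
  wlog hx : 0 ≤ x generalizing x
  · simpa using this (-x) (by linarith)
  rcases hx.eq_or_lt with rfl | hx
  · norm_num
  rw [Real.sinc_of_ne_zero hx.ne', lt_div_iff₀ hx]
  exact neg_mul_lt_sin hx

lemma sinc_add_pi_lt : Real.sinc (1.351817 + π) < -0.217233 := by
  have hs := sin_cos_tangentPoint_bounds.1.1
  have hπ := Real.pi_lt_d6
  have hpos : 0 < 1.351817 + π := by positivity
  rw [Real.sinc_of_ne_zero hpos.ne', div_lt_iff₀ hpos, Real.sin_add_pi]
  linarith

lemma exists_forall_sinc_le : ∃ x₀, ∀ x, Real.sinc x₀ ≤ Real.sinc x := by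
  refine Real.continuous_sinc.exists_forall_le' (1.351817 + π) ?_
  filter_upwards [tendsto_norm_cocompact_atTop.eventually (eventually_gt_atTop 5)] with x hx
  rw [Real.norm_eq_abs] at hx
  have : |x|⁻¹ < 5⁻¹ := inv_strictAnti₀ (by norm_num) hx
  linarith [neg_inv_abs_le_sinc x, sinc_add_pi_lt]

/-- The function equal to `sin x / x` for `x ≠ 0` and to `1` at `0` attains a global
minimum on `ℝ`, and its minimum value `c₀` satisfies `−0.217234 < c₀ < −0.217233`. -/
theorem statement19 :
    (∃ x₀ : ℝ, (∀ x : ℝ, sinc x₀ ≤ sinc x) ∧ sinc x₀ = c0) ∧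
    -0.217234 < c0 ∧ c0 < -0.217233 := by
  obtain ⟨x₀, hmin⟩ := exists_forall_sinc_le
  have hc0 : c0 = Real.sinc x₀ := by
    rw [c0, sinc_eq_real_sinc]
    exact IsLeast.csInf_eq ⟨mem_range_self x₀, forall_mem_range.2 hmin⟩
  rw [hc0, sinc_eq_real_sinc]
  exact ⟨⟨x₀, hmin, rfl⟩, neg_lt_sinc x₀, (hmin _).trans_lt sinc_add_pi_lt⟩

end
end
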